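/- Let p be a prime and for n, m ∈ ℤ define ζ_n ∈ ℓ²(ℕ) by ζ_n(k) = (2^{3/2}(log p)^{1/2}/(4πn + 3i log p)) · x_p(n)^k with x_p(n) = (4πn − i log p)/(4πn + 3i log p). Then ⟨ζ_m, ζ_n⟩ = 1/(2πi m − 2πi n + log p). -/

import Mathlib

open Complex

noncomputable def xp (p : ℕ) (n : ℤ) : ℂ :=
  (4 * Real.pi * n - Complex.I * Real.log p) / (4 * Real.pi * n + 3 * Complex.I * Real.log p)

noncomputable def zeta (p : ℕ) (n : ℤ) (k : ℕ) : ℂ :=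
  (((2 : ℝ) ^ ((3 : ℝ) / 2) : ℝ) * ((Real.log p) ^ ((1 : ℝ) / 2) : ℝ) /
    (4 * Real.pi * n + 3 * Complex.I * Real.log p)) * (xp p n) ^ k

theorem stmt12 (p : ℕ) (hp : p.Prime) (m n : ℤ) :
    ∑' k : ℕ, (starRingEnd ℂ) (zeta p m k) * zeta p n k =
      1 / (2 * Real.pi * Complex.I * m - 2 * Real.pi * Complex.I * n + Real.log p) := by
  have hL : 0 < Real.log p := Real.log_pos (by exact_mod_cast hp.one_lt)
  set L := Real.log p with hLdef
  have hden : ∀ j : ℤ, (4 * Real.pi * j + 3 * Complex.I * L : ℂ) ≠ 0 := by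
    intro j h
    have := congrArg Complex.im h
    simp at this
    linarith
  have hden' : ∀ j : ℤ, (4 * Real.pi * j - 3 * Complex.I * L : ℂ) ≠ 0 := by
    intro j h
    have := congrArg Complex.im h
    simp at this
    linarith
  have hnorm : ∀ j : ℤ, ‖xp p j‖ < 1 := by
    intro j
    rw [xp, norm_div, div_lt_one ((norm_pos_iff).2 (hden j))]
    have e1 : ‖(4*(Real.pi:ℂ)*(j:ℂ) - Complex.I*(L:ℂ))‖^2 = (4*Real.pi*j)^2 + L^2 := by
      rw [Complex.sq_norm]
      simp [Complex.normSq_apply]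
      ring
    have e2 : ‖(4*(Real.pi:ℂ)*(j:ℂ) + 3*Complex.I*(L:ℂ))‖^2 = (4*Real.pi*j)^2 + 9*L^2 := by
      rw [Complex.sq_norm]
      simp [Complex.normSq_apply]
      ring
    refine lt_of_pow_lt_pow_left₀ 2 (norm_nonneg _) ?_
    rw [e1, e2]
    nlinarith
  set r : ℂ := (starRingEnd ℂ) (xp p m) * xp p n with hr
  have hrlt : ‖r‖ < 1 := by
    rw [hr, norm_mul, RCLike.norm_conj]
    calc ‖xp p m‖ * ‖xp p n‖ ≤ ‖xp p m‖ * 1 :=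
          mul_le_mul_of_nonneg_left (hnorm n).le (norm_nonneg _)
      _ = ‖xp p m‖ := mul_one _
      _ < 1 := hnorm m
  set C : ℂ := (starRingEnd ℂ) ((((2 : ℝ) ^ ((3 : ℝ) / 2) : ℝ) * ((L ^ ((1 : ℝ) / 2) : ℝ)) /
      (4 * Real.pi * m + 3 * Complex.I * L) : ℂ)) *
      ((((2 : ℝ) ^ ((3 : ℝ) / 2) : ℝ) * ((L ^ ((1 : ℝ) / 2) : ℝ)) /
      (4 * Real.pi * n + 3 * Complex.I * L) : ℂ)) with hC
  have hsum : ∑' k : ℕ, (starRingEnd ℂ) (zeta p m k) * zeta p n k = C * (1 - r)⁻¹ := by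
    have : ∀ k : ℕ, (starRingEnd ℂ) (zeta p m k) * zeta p n k = C * r ^ k := by
      intro k
      simp only [zeta, hC, hr, map_mul, map_pow, mul_pow]
      ring
    rw [tsum_congr this, tsum_mul_left, tsum_geometric_of_norm_lt_one hrlt]
  rw [hsum]
  have hD : (2 * Real.pi * Complex.I * m - 2 * Real.pi * Complex.I * n + L : ℂ) ≠ 0 := by
    intro h
    have := congrArg Complex.re h
    simp at this
    linarith
  have h1r : (1 : ℂ) - r ≠ 0 := by
    intro h
    have : r = 1 := by rwa [sub_eq_zero, eq_comm] at h
    rw [this] at hrlt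
    simp at hrlt
  rw [inv_eq_one_div, mul_one_div, div_eq_div_iff h1r hD, one_mul]
  -- goal : C * D = 1 - r
  have hxconj : (starRingEnd ℂ) (xp p m) =
      (4 * Real.pi * m + Complex.I * L) / (4 * Real.pi * m - 3 * Complex.I * L) := by
    rw [xp, map_div₀]
    congr 1 <;>
      simp only [map_sub, map_add, map_mul, map_ofNat, Complex.conj_ofReal, Complex.conj_I,
        map_intCast] <;> ring
  have hRR : ((((2:ℝ)^((3:ℝ)/2) : ℝ) : ℂ) * (((L^((1:ℝ)/2) : ℝ)) : ℂ)) *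
      ((((2:ℝ)^((3:ℝ)/2) : ℝ) : ℂ) * (((L^((1:ℝ)/2) : ℝ)) : ℂ)) = ((8 * L : ℝ) : ℂ) := by
    rw [show ((((2:ℝ)^((3:ℝ)/2) : ℝ) : ℂ) * (((L^((1:ℝ)/2) : ℝ)) : ℂ)) *
        ((((2:ℝ)^((3:ℝ)/2) : ℝ) : ℂ) * (((L^((1:ℝ)/2) : ℝ)) : ℂ))
        = ((((2:ℝ)^((3:ℝ)/2) * (2:ℝ)^((3:ℝ)/2) * (L^((1:ℝ)/2) * L^((1:ℝ)/2)) : ℝ)) : ℂ) from by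
      push_cast; ring]
    congr 1
    rw [← Real.rpow_add (by norm_num : (0:ℝ) < 2), ← Real.rpow_add hL]
    norm_num
  have hCconj : C = ((((2:ℝ)^((3:ℝ)/2) : ℝ) : ℂ) * (((L^((1:ℝ)/2) : ℝ)) : ℂ)) *
      ((((2:ℝ)^((3:ℝ)/2) : ℝ) : ℂ) * (((L^((1:ℝ)/2) : ℝ)) : ℂ)) /
      ((4 * Real.pi * m - 3 * Complex.I * L) * (4 * Real.pi * n + 3 * Complex.I * L)) := by
    rw [hC]
    simp only [map_div₀, map_mul, map_add, map_ofNat, Complex.conj_ofReal, Complex.conj_I,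
      map_intCast]
    rw [div_mul_div_comm]
    congr 2
    ring
  have hr2 : r = ((4 * Real.pi * m + Complex.I * L) * (4 * Real.pi * n - Complex.I * L)) /
      ((4 * Real.pi * m - 3 * Complex.I * L) * (4 * Real.pi * n + 3 * Complex.I * L)) := by
    rw [hr, hxconj, xp, div_mul_div_comm]
  have hkey : (1 - r) * ((4 * Real.pi * m - 3 * Complex.I * L) * (4 * Real.pi * n + 3 * Complex.I * L))
      = ((8 * L : ℝ) : ℂ) * (2 * Real.pi * Complex.I * m - 2 * Real.pi * Complex.I * n + L) := by
    rw [hr2, sub_mul, div_mul_cancel₀ _ (mul_ne_zero (hden' m) (hden n)), one_mul]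
    push_cast
    linear_combination (-8*((L:ℂ))^2) * Complex.I_sq
  rw [hCconj, hRR, div_mul_eq_mul_div, ← hkey, mul_div_assoc,
    div_self (mul_ne_zero (hden' m) (hden n)), mul_one]
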